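/- arXiv:2209.13024 — 3 statements merged into one kernel-verified Lean document; each statement's English description precedes it below -/
import Mathlib

section
/- Consider the annulus between two concentric circles of radii 26/27 and 1 centered at the origin. Inscribe a regular 13-gon in the outer circle and partition the annulus into 13 congruent zones by the segments from the center to the vertices of the 13-gon. Then any two points lying in the same zone are at distance at most 13/27 from each other; in particular, a disk of radius 13/27 centered at any point of a zone covers the entire zone. -/
open Real

/-! Writing two points of the zone in polar coordinates `(r, θ)` and `(s, φ)`, the law of cosines
gives `dist² = (r - s)² + 4 r s sin²((θ - φ) / 2)`. In the zone `|r - s| ≤ 1/27`, `r s ≤ 1` and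
`|θ - φ| / 2 ≤ π / 13`, so `dist² ≤ 1/27² + 4 sin²(π / 13)`, and the estimate `sin (π / 13) < 6 / 25`
(one more term of the Taylor series than `sin x ≤ x`) makes this at most `(13/27)²`. -/

def annularSector (a b θ₀ α : ℝ) : Set (EuclideanSpace ℝ (Fin 2)) :=
  {p | ∃ r θ : ℝ, a ≤ r ∧ r ≤ b ∧ θ₀ ≤ θ ∧ θ ≤ θ₀ + α ∧
    p = (!₂[r * cos θ, r * sin θ] : EuclideanSpace ℝ (Fin 2))}

lemma dist_polar_sq (r s θ φ : ℝ) :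
    dist (!₂[r * cos θ, r * sin θ] : EuclideanSpace ℝ (Fin 2)) !₂[s * cos φ, s * sin φ] ^ 2 =
      (r - s) ^ 2 + 4 * r * s * sin ((θ - φ) / 2) ^ 2 := by
  have hcos : cos (θ - φ) = 1 - 2 * sin ((θ - φ) / 2) ^ 2 := by
    rw [← cos_two_mul_eq_one_sub, mul_div_cancel₀ _ two_ne_zero]
  rw [EuclideanSpace.dist_sq_eq]
  simp only [Fin.sum_univ_two, Real.dist_eq, sq_abs, Matrix.cons_val_zero, Matrix.cons_val_one,
    Matrix.cons_val_fin_one]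
  linear_combination r ^ 2 * sin_sq_add_cos_sq θ + s ^ 2 * sin_sq_add_cos_sq φ
    + 2 * r * s * cos_sub θ φ - 2 * r * s * hcos

lemma abs_sin_le_sin_of_abs_le {x a : ℝ} (ha : a ≤ π / 2) (hx : |x| ≤ a) : |sin x| ≤ sin a := by
  rw [abs_sin_eq_sin_abs_of_abs_le_pi (by linarith [pi_pos])]
  exact sin_le_sin_of_le_of_le_pi_div_two (by linarith [abs_nonneg x, pi_pos]) ha hx

lemma dist_sq_le_of_mem_annularSector {a b θ₀ α : ℝ} (ha : 0 ≤ a) (hα : α ≤ π)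
    {p q : EuclideanSpace ℝ (Fin 2)} (hp : p ∈ annularSector a b θ₀ α)
    (hq : q ∈ annularSector a b θ₀ α) :
    dist p q ^ 2 ≤ (b - a) ^ 2 + 4 * b ^ 2 * sin (α / 2) ^ 2 := by
  obtain ⟨r, θ, har, hrb, hθ₀, hθα, rfl⟩ := hp
  obtain ⟨s, φ, has, hsb, hφ₀, hφα, rfl⟩ := hq
  have hsin : sin ((θ - φ) / 2) ^ 2 ≤ sin (α / 2) ^ 2 := by
    rw [← sq_abs]
    gcongr
    refine abs_sin_le_sin_of_abs_le (by linarith) ?_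
    rw [abs_div, abs_two]
    gcongr
    exact abs_sub_le_iff.2 ⟨by linarith, by linarith⟩
  have hrs : (r - s) ^ 2 ≤ (b - a) ^ 2 := sq_le_sq' (by linarith) (by linarith)
  have hrs' : r * s ≤ b ^ 2 := by nlinarith
  rw [dist_polar_sq]
  nlinarith [sq_nonneg (sin ((θ - φ) / 2)), mul_nonneg (by linarith : 0 ≤ r) (by linarith : 0 ≤ s)]

lemma sin_pi_div_thirteen_lt : sin (π / 13) < 6 / 25 := by
  have hx₀ : 0.24165 < π / 13 := by linarith [pi_gt_d4]
  have hx₁ : π / 13 < 0.24167 := by linarith [pi_lt_d4]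
  have hbound := (abs_le.1 (sin_bound (x := π / 13) (by rw [abs_of_pos (by linarith)]; linarith))).2
  rw [abs_of_pos (by linarith)] at hbound
  nlinarith [pow_le_pow_left₀ (by positivity) hx₁.le 5, pow_le_pow_left₀ (by norm_num) hx₀.le 3]

/-- Any two points of a zone of the annulus (inner radius 26/27, outer radius 1,
angular width 2π/13) are within distance 13/27; in particular a disk of radius
13/27 centered at any point of the zone covers the whole zone. -/
theorem stmt_0 (θ₀ : ℝ) (Z : Set (EuclideanSpace ℝ (Fin 2)))
    (hZ : Z = {p | ∃ r θ : ℝ, 26/27 ≤ r ∧ r ≤ 1 ∧ θ₀ ≤ θ ∧ θ ≤ θ₀ + 2*π/13 ∧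
      p = (!₂[r * Real.cos θ, r * Real.sin θ] : EuclideanSpace ℝ (Fin 2))}) :
    (∀ p ∈ Z, ∀ q ∈ Z, dist p q ≤ 13/27) ∧
    (∀ p ∈ Z, Z ⊆ Metric.closedBall p (13/27)) := by
  change Z = annularSector (26/27) 1 θ₀ (2*π/13) at hZ
  subst hZ
  have diam : ∀ p ∈ annularSector (26/27) 1 θ₀ (2*π/13), ∀ q ∈ annularSector (26/27) 1 θ₀ (2*π/13),
      dist p q ≤ 13/27 := by
    intro p hp q hq
    have hsq := dist_sq_le_of_mem_annularSector (by norm_num) (by linarith [pi_pos]) hp hq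
    rw [show 2 * π / 13 / 2 = π / 13 by ring] at hsq
    have hsin₀ : 0 ≤ sin (π / 13) :=
      sin_nonneg_of_nonneg_of_le_pi (by positivity) (by linarith [pi_pos])
    refine (pow_le_pow_iff_left₀ dist_nonneg (by norm_num) two_ne_zero).1 ?_
    nlinarith [sin_pi_div_thirteen_lt]
  exact ⟨diam, fun p hp q hq => Metric.mem_closedBall.2 (diam q hq p hp)⟩
end

section
/- Let P be a finite set of points in ℝ², each point p assigned a positive rate r_p, and let h = max over pairs p,q of r_p/r_q. Let δ ≥ 1 be an integer and suppose E ⊆ P is a dominating set of the disk graph G_{δ−1} whose disks have radius ((δ−1)/2)·r_p for each p ∈ P. If every point of E is ignited by step |E| and the process continues for h·(δ−1) further steps (the fire from a point q spreading at rate r_q per step), then every point of P is burned within |E| + h·(δ−1) steps. In particular, for any p ∉ E dominated by q ∈ E, the distance ‖p − q‖ ≤ ((δ−1)/2)(r_p + r_q) ≤ r_q·h·(δ−1). -/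
/-!
A point of `E` burns itself at its ignition time. A point `p ∉ E` is dominated by some `q ∈ E`,
and since both rates are at most `h · r_q`, the domination bound `((δ−1)/2)(r_p + r_q)` is at most
`r_q · h(δ−1)`: the fire from `q`, lit no later than step `|E|`, reaches `p` within `h(δ−1)` more steps.
-/

theorem le_mul_mul_of_le_half_mul_add {d a x y h : ℝ} (ha : 0 ≤ a) (hx : x ≤ h * y)
    (hy : y ≤ h * y) (hd : d ≤ a / 2 * (x + y)) : d ≤ y * h * a :=
  calc d ≤ a / 2 * (x + y) := hd
    _ ≤ a / 2 * (h * y + h * y) := by gcongr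
    _ = y * h * a := by ring

theorem le_mul_sub_of_le_mul {d r t T s : ℝ} (hr : 0 ≤ r) (hs : s ≤ T) (hd : d ≤ r * t) :
    d ≤ r * (T + t - s) :=
  hd.trans (mul_le_mul_of_nonneg_left (by linarith) hr)

/-- Point burning with non-uniform rates: if E is a dominating set of the disk graph
G_{δ−1}, every point of E is ignited by step |E|, and the process runs for h·(δ−1)
further steps, then every point of P is burned within |E| + h·(δ−1) steps. -/
theorem stmt_7 (P : Finset (EuclideanSpace ℝ (Fin 2)))
    (r : EuclideanSpace ℝ (Fin 2) → ℝ) (hr : ∀ p ∈ P, 0 < r p)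
    (h : ℝ) (hh : ∀ p ∈ P, ∀ q ∈ P, r p ≤ h * r q)
    (δ : ℕ) (hδ : 1 ≤ δ)
    (E : Finset (EuclideanSpace ℝ (Fin 2))) (hEP : E ⊆ P)
    (hdom : ∀ p ∈ P, p ∈ E ∨ ∃ q ∈ E,
      dist p q ≤ (((δ : ℝ) - 1) / 2) * (r p + r q))
    (s : EuclideanSpace ℝ (Fin 2) → ℕ) (hs : ∀ q ∈ E, (s q : ℝ) ≤ (E.card : ℝ)) :
    (∀ p ∈ P, ∃ q ∈ E,
      dist p q ≤ r q * (((E.card : ℝ) + h * ((δ : ℝ) - 1)) - (s q : ℝ))) ∧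
    (∀ p ∈ P, p ∉ E → ∀ q ∈ E,
      dist p q ≤ (((δ : ℝ) - 1) / 2) * (r p + r q) →
      dist p q ≤ r q * h * ((δ : ℝ) - 1)) := by
  have hδ₁ : (0 : ℝ) ≤ δ - 1 := sub_nonneg.2 (by exact_mod_cast hδ)
  have dominated : ∀ p ∈ P, ∀ q ∈ E, dist p q ≤ ((δ - 1 : ℝ) / 2) * (r p + r q) →
      dist p q ≤ r q * h * (δ - 1) := fun p hp q hq hd =>
    le_mul_mul_of_le_half_mul_add hδ₁ (hh p hp q (hEP hq)) (hh q (hEP hq) q (hEP hq)) hd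
  refine ⟨fun p hp => ?_, fun p hp _ => dominated p hp⟩
  rcases hdom p hp with hpE | ⟨q, hq, hd⟩
  · have hh₁ : 1 ≤ h := one_le_of_le_mul_right₀ (hr p hp) (hh p hp p hp)
    refine ⟨p, hpE, le_mul_sub_of_le_mul (hr p hp).le (hs p hpE) ?_⟩
    rw [dist_self]
    exact mul_nonneg (hr p hp).le (mul_nonneg (by linarith) hδ₁)
  · refine ⟨q, hq, le_mul_sub_of_le_mul (hr q (hEP hq)).le (hs q hq) ?_⟩
    exact (dominated p hp q hq hd).trans_eq (mul_assoc _ _ _)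
end

section
/- Any independent pair of intersecting 3-clauses in an LSAT instance involves exactly 5 distinct literals; hence an LSAT instance over n variables (where both literals of each variable occur) contains at most 2n/5 heavy intersection literals. -/
/-!
If `C ∩ D = {ℓ}` for two clauses `C ≠ D`, then `C` and `D` meet no other clause, so a second
heavy pair that touches `C ∪ D` must be the same pair `{C, D}`, with the same intersection
literal. The sets `C ∪ D` of distinct heavy literals are therefore pairwise disjoint, and each
has `3 + 3 - 1 = 5` elements, so they pack at most `2n / 5` of them into the `2n` literals.
-/

open Finset

variable {α : Type*} [DecidableEq α]

/-- The LSAT condition: each clause meets at most one other clause. -/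
def MeetsAtMostOne (clauses : Finset (Finset α)) : Prop :=
  ∀ C ∈ clauses, ∀ D ∈ clauses, ∀ E ∈ clauses,
    C ≠ D → C ≠ E → (C ∩ D).Nonempty → (C ∩ E).Nonempty → D = E

def heavyLiterals (clauses : Finset (Finset α)) : Set α :=
  {ℓ | ∃ C ∈ clauses, ∃ D ∈ clauses, C ≠ D ∧ C.card = 3 ∧ D.card = 3 ∧ C ∩ D = {ℓ}}

theorem card_mul_le_card_of_pairwiseDisjoint {ι β : Type*} [Fintype β] [DecidableEq β]
    {T : Finset ι} {U : ι → Finset β} {k : ℕ} (hU : ∀ i ∈ T, k ≤ #(U i))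
    (hdisj : (T : Set ι).PairwiseDisjoint U) : #T * k ≤ Fintype.card β :=
  calc #T * k = ∑ _ ∈ T, k := by rw [sum_const, smul_eq_mul]
    _ ≤ ∑ i ∈ T, #(U i) := sum_le_sum hU
    _ = #(T.biUnion U) := (card_biUnion hdisj).symm
    _ ≤ Fintype.card β := card_le_univ _

theorem card_union_eq_five {C D : Finset α} (hC : #C = 3) (hD : #D = 3) (hCD : #(C ∩ D) = 1) :
    #(C ∪ D) = 5 := by
  have := card_union_add_card_inter C D
  omega

namespace MeetsAtMostOne

variable {clauses : Finset (Finset α)} {C D C' D' : Finset α} {ℓ ℓ' : α}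

theorem eq_of_inter_nonempty (h : MeetsAtMostOne clauses)
    (hC : C ∈ clauses) (hD : D ∈ clauses) (hC' : C' ∈ clauses) (hD' : D' ∈ clauses)
    (hCD : C ≠ D) (hCD' : C' ≠ D') (h₁ : C ∩ D = {ℓ}) (h₂ : C' ∩ D' = {ℓ'})
    (hCC' : (C ∩ C').Nonempty) : ℓ = ℓ' := by
  suffices C ∩ D = C' ∩ D' by rwa [h₁, h₂, singleton_inj] at this
  have hCD_ne : (C ∩ D).Nonempty := by simp [h₁]
  have hC'D'_ne : (C' ∩ D').Nonempty := by simp [h₂]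
  by_cases hCeq : C = C'
  · subst hCeq
    rw [h C hC D hD D' hD' hCD hCD' hCD_ne hC'D'_ne]
  · -- `C'` meets `C`, so it is `D`; then `D'` meets `D`, so it is `C`.
    obtain rfl : C' = D := h C hC C' hC' D hD hCeq hCD hCC' hCD_ne
    have hDC : (C' ∩ C).Nonempty := by rwa [inter_comm]
    obtain rfl : D' = C := h C' hC' D' hD' C hC hCD' (Ne.symm hCD) hC'D'_ne hDC
    exact inter_comm _ _

theorem eq_of_not_disjoint_union (h : MeetsAtMostOne clauses)
    (hC : C ∈ clauses) (hD : D ∈ clauses) (hC' : C' ∈ clauses) (hD' : D' ∈ clauses)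
    (hCD : C ≠ D) (hCD' : C' ≠ D') (h₁ : C ∩ D = {ℓ}) (h₂ : C' ∩ D' = {ℓ'})
    (hnd : ¬Disjoint (C ∪ D) (C' ∪ D')) : ℓ = ℓ' := by
  obtain ⟨x, hx, hx'⟩ := not_disjoint_iff.mp hnd
  have h₁' : D ∩ C = {ℓ} := by rw [inter_comm, h₁]
  have h₂' : D' ∩ C' = {ℓ'} := by rw [inter_comm, h₂]
  rcases mem_union.mp hx with hx | hx <;> rcases mem_union.mp hx' with hx' | hx'
  · exact h.eq_of_inter_nonempty hC hD hC' hD' hCD hCD' h₁ h₂ ⟨x, mem_inter.mpr ⟨hx, hx'⟩⟩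
  · exact h.eq_of_inter_nonempty hC hD hD' hC' hCD hCD'.symm h₁ h₂' ⟨x, mem_inter.mpr ⟨hx, hx'⟩⟩
  · exact h.eq_of_inter_nonempty hD hC hC' hD' hCD.symm hCD' h₁' h₂ ⟨x, mem_inter.mpr ⟨hx, hx'⟩⟩
  · exact h.eq_of_inter_nonempty hD hC hD' hC' hCD.symm hCD'.symm h₁' h₂'
      ⟨x, mem_inter.mpr ⟨hx, hx'⟩⟩

theorem ncard_heavyLiterals_mul_five_le [Fintype α] (h : MeetsAtMostOne clauses) :
    (heavyLiterals clauses).ncard * 5 ≤ Fintype.card α := by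
  classical
  have hpair : ∀ ℓ ∈ (heavyLiterals clauses).toFinset, ∃ p : Finset α × Finset α,
      p.1 ∈ clauses ∧ p.2 ∈ clauses ∧ p.1 ≠ p.2 ∧ p.1.card = 3 ∧ p.2.card = 3 ∧
        p.1 ∩ p.2 = {ℓ} := by
    intro ℓ hℓ
    obtain ⟨C, hC, D, hD, hrest⟩ := Set.mem_toFinset.mp hℓ
    exact ⟨(C, D), hC, hD, hrest⟩
  choose! pair hpair using hpair
  rw [Set.ncard_eq_toFinset_card']
  refine card_mul_le_card_of_pairwiseDisjoint (U := fun ℓ ↦ (pair ℓ).1 ∪ (pair ℓ).2) ?_ ?_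
  · intro ℓ hℓ
    obtain ⟨-, -, -, h₁, h₂, h₃⟩ := hpair ℓ hℓ
    exact (card_union_eq_five h₁ h₂ (by rw [h₃, card_singleton])).ge
  · intro ℓ hℓ ℓ' hℓ' hne
    obtain ⟨hC, hD, hCD, -, -, h₁⟩ := hpair ℓ hℓ
    obtain ⟨hC', hD', hCD', -, -, h₂⟩ := hpair ℓ' hℓ'
    by_contra hnd
    exact hne (h.eq_of_not_disjoint_union hC hD hC' hD' hCD hCD' h₁ h₂ hnd)

end MeetsAtMostOne

theorem stmt_16_general (n : ℕ) (clauses : Finset (Finset (Fin (2 * n))))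
    (hone : ∀ C ∈ clauses, ∀ D ∈ clauses, ∀ E ∈ clauses,
      C ≠ D → C ≠ E → (C ∩ D).Nonempty → (C ∩ E).Nonempty → D = E) :
    (∀ C ∈ clauses, ∀ D ∈ clauses, C ≠ D → C.card = 3 → D.card = 3 →
      (C ∩ D).card = 1 → (C ∪ D).card = 5) ∧
    ({ℓ : Fin (2 * n) | ∃ C ∈ clauses, ∃ D ∈ clauses,
        C ≠ D ∧ C.card = 3 ∧ D.card = 3 ∧ C ∩ D = {ℓ}}.ncard) * 5 ≤ 2 * n := by
  refine ⟨fun C _ D _ _ ↦ card_union_eq_five, ?_⟩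
  exact (MeetsAtMostOne.ncard_heavyLiterals_mul_five_le (clauses := clauses) hone).trans_eq
    (Fintype.card_fin _)

/-- In an LSAT instance over n variables (2n literals), a pair of intersecting
3-clauses involves exactly 5 distinct literals; hence there are at most 2n/5 heavy
intersection literals. -/
theorem stmt_16 (n : ℕ) (clauses : Finset (Finset (Fin (2 * n))))
    (hsize : ∀ C ∈ clauses, C.Nonempty ∧ C.card ≤ 3)
    (hshare : ∀ C ∈ clauses, ∀ D ∈ clauses, C ≠ D → (C ∩ D).card ≤ 1)
    (hone : ∀ C ∈ clauses, ∀ D ∈ clauses, ∀ E ∈ clauses,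
      C ≠ D → C ≠ E → (C ∩ D).Nonempty → (C ∩ E).Nonempty → D = E) :
    (∀ C ∈ clauses, ∀ D ∈ clauses, C ≠ D → C.card = 3 → D.card = 3 →
      (C ∩ D).card = 1 → (C ∪ D).card = 5) ∧
    ({ℓ : Fin (2 * n) | ∃ C ∈ clauses, ∃ D ∈ clauses,
        C ≠ D ∧ C.card = 3 ∧ D.card = 3 ∧ C ∩ D = {ℓ}}.ncard) * 5 ≤ 2 * n :=
  stmt_16_general n clauses hone
end
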